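/- Bias bound for the RL-LOW relative-reward estimate: For every consistent offline RLHF instance v, every n ≥ 1 with n·N_{k,i,j} ∈ ℕ, and every (k,i) ∈ 𝒮 × 𝒜 with i ≠ i*_k, it holds that |E[r̂_{k,i*_k,i}] − (r_{k,i*_k} − r_{k,i})| ≤ 3·γ̃_{k,i}/((1−β)^4·√n), where β = e^{2L}/(1+e^{2L}) and γ̃_{k,i} = Σ_{(k',i',j'):N_{k',i',j'}>0} |w^{(k,i,i*_k)}_{k',i',j'}|/√(N_{k',i',j'}). -/

import Mathlib

open MeasureTheory ProbabilityTheory Real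

namespace RLHF

/-- The logistic sigmoid function. -/
noncomputable def sigmoid (x : ℝ) : ℝ := Real.exp x / (1 + Real.exp x)

/-- Clipping to the interval `[1/(1+e^{2L}), e^{2L}/(1+e^{2L})]`. -/
noncomputable def clip (L x : ℝ) : ℝ :=
  max (1 / (1 + Real.exp (2 * L))) (min (Real.exp (2 * L) / (1 + Real.exp (2 * L))) x)

/-- The logit (log-odds) function. -/
noncomputable def logit (x : ℝ) : ℝ := Real.log (x / (1 - x))

/-- An offline RLHF instance: state distribution, feature map, parameter vector and
sampling proportions. -/
structure Inst (S A d : ℕ) where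
  ρ : Fin S → ℝ
  φ : Fin S → Fin A → EuclideanSpace ℝ (Fin d)
  θ : EuclideanSpace ℝ (Fin d)
  N : Fin S → Fin A → Fin A → ℝ
  ρ_pos : ∀ k, 0 < ρ k
  ρ_sum : ∑ k, ρ k = 1
  N_nonneg : ∀ k i j, 0 ≤ N k i j
  N_sum : ∑ k, ∑ i, ∑ j, N k i j = 1
  φ_ne : ∀ k i j, i ≠ j → φ k i ≠ φ k j

namespace Inst

variable {S A d : ℕ}

/-- The reward of action `i` in state `k`. -/
noncomputable def r (v : Inst S A d) (k : Fin S) (i : Fin A) : ℝ :=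
  @inner ℝ _ _ (v.φ k i) v.θ

/-- The span of the sampled feature differences. -/
def W (v : Inst S A d) : Submodule ℝ (EuclideanSpace ℝ (Fin d)) :=
  Submodule.span ℝ {x | ∃ k i j, 0 < v.N k i j ∧ x = v.φ k i - v.φ k j}

/-- Consistency of an instance. -/
def Consistent (v : Inst S A d) : Prop :=
  ∀ k i j, v.φ k i - v.φ k j ∈ v.W

/-- `istar` assigns to each state its unique best action. -/
def BestAction (v : Inst S A d) (istar : Fin S → Fin A) : Prop :=
  ∀ k j, j ≠ istar k → v.r k j < v.r k (istar k)

/-- The suboptimality gap. -/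
noncomputable def gap (v : Inst S A d) (istar : Fin S → Fin A) (k : Fin S) (i : Fin A) : ℝ :=
  v.r k (istar k) - v.r k i

/-- The objective value of a candidate weight vector. -/
noncomputable def cost (v : Inst S A d) (u : Fin S → Fin A → Fin A → ℝ) : ℝ :=
  ∑ k', ∑ i', ∑ j', if 0 < v.N k' i' j' then (u k' i' j') ^ 2 / v.N k' i' j' else 0

/-- Feasibility of a weight vector for the pair `(i,j)` in state `k`: it vanishes where
`N` vanishes and expresses `φ(k,i) − φ(k,j)` as a linear combination of sampled feature
differences. -/
def Feasible (v : Inst S A d) (k : Fin S) (i j : Fin A)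
    (u : Fin S → Fin A → Fin A → ℝ) : Prop :=
  (∀ k' i' j', v.N k' i' j' = 0 → u k' i' j' = 0) ∧
  v.φ k i - v.φ k j = ∑ k', ∑ i', ∑ j', u k' i' j' • (v.φ k' i' - v.φ k' j')

/-- `w` is a locally optimal weight vector for `(k,i,j)`. -/
def IsLOW (v : Inst S A d) (k : Fin S) (i j : Fin A)
    (w : Fin S → Fin A → Fin A → ℝ) : Prop :=
  v.Feasible k i j w ∧ ∀ u, v.Feasible k i j u → v.cost w ≤ v.cost u

/-- `γ̃_{k,i}`-type quantity: weighted sum of absolute weights over `1/√N`. -/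
noncomputable def gammaTilde (v : Inst S A d) (u : Fin S → Fin A → Fin A → ℝ) : ℝ :=
  ∑ k', ∑ i', ∑ j',
    if 0 < v.N k' i' j' then |u k' i' j'| / Real.sqrt (v.N k' i' j') else 0

/-- `γ^DP`-type quantity. -/
noncomputable def gammaDP (v : Inst S A d) (u : Fin S → Fin A → Fin A → ℝ) : ℝ :=
  ∑ k', ∑ i', ∑ j',
    if 0 < v.N k' i' j' then (u k' i' j' / v.N k' i' j') ^ 2 else 0

/-- `γ̃^DP`-type quantity. -/
noncomputable def gammaTildeDP (v : Inst S A d) (u : Fin S → Fin A → Fin A → ℝ) : ℝ :=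
  ∑ k', ∑ i', ∑ j',
    if 0 < v.N k' i' j' then |u k' i' j'| / v.N k' i' j' else 0

/-- The hardness parameter `H(v)`, where `w k i j` denotes the locally optimal weights
for the triple `(k,i,j)`. -/
noncomputable def H (v : Inst S A d) (istar : Fin S → Fin A)
    (w : Fin S → Fin A → Fin A → Fin S → Fin A → Fin A → ℝ) : ℝ :=
  sSup {x | ∃ k i, i ≠ istar k ∧
    x = v.cost (w k i (istar k)) / (v.gap istar k i) ^ 2}

/-- The DP hardness parameter `H_DP^{(ε,δ)}(v)`. -/
noncomputable def HDP (v : Inst S A d) (istar : Fin S → Fin A)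
    (w : Fin S → Fin A → Fin A → Fin S → Fin A → Fin A → ℝ) (ε δ : ℝ) : ℝ :=
  sSup {x | ∃ k i, i ≠ istar k ∧
    x = Real.sqrt (Real.log (1.25 / δ) * v.gammaDP (w k i (istar k))) /
        (Real.sqrt ε * v.gap istar k i)}

/-- The empirical success proportion `B_{k,i,j}` computed from counts `y`. -/
noncomputable def B (v : Inst S A d) (n : ℕ) (y : Fin S → Fin A → Fin A → ℕ)
    (k : Fin S) (i j : Fin A) : ℝ :=
  if 0 < v.N k i j then (y k i j : ℝ) / (n * v.N k i j) else 0

/-- The RL-LOW relative reward estimate `r̂_{k,i,j}` computed from counts `y`. -/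
noncomputable def rhat (v : Inst S A d) (L : ℝ) (n : ℕ)
    (w : Fin S → Fin A → Fin A → Fin S → Fin A → Fin A → ℝ)
    (y : Fin S → Fin A → Fin A → ℕ) (k : Fin S) (i j : Fin A) : ℝ :=
  if i = j then 0 else
    ∑ k', ∑ i', ∑ j', w k i j k' i' j' * logit (clip L (v.B n y k' i' j'))

/-- The DP-RL-LOW private relative reward estimate `r̃_{k,i,j}` computed from counts `y`
and Gaussian noise realizations `z`. -/
noncomputable def rtilde (v : Inst S A d) (L : ℝ) (n : ℕ)
    (w : Fin S → Fin A → Fin A → Fin S → Fin A → Fin A → ℝ)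
    (y : Fin S → Fin A → Fin A → ℕ) (z : Fin S → Fin A → Fin A → ℝ)
    (k : Fin S) (i j : Fin A) : ℝ :=
  if i = j then 0 else
    ∑ k', ∑ i', ∑ j', w k i j k' i' j' *
      logit (clip L
        (if 0 < v.N k' i' j' then
          (y k' i' j' : ℝ) / (n * v.N k' i' j') + z k' i' j' else 0))

/-- Simple regret of the action assignment `ihat` (using the best actions `istar`). -/
noncomputable def regret (v : Inst S A d) (istar : Fin S → Fin A)
    (ihat : Fin S → Fin A) : ℝ :=
  ∑ k, v.ρ k * (v.r k (istar k) - v.r k (ihat k))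

/-- Simple regret of the action assignment `ihat` (via suprema of rewards; this does not
require the best action to be unique). -/
noncomputable def regretSup (v : Inst S A d) (ihat : Fin S → Fin A) : ℝ :=
  ∑ k, v.ρ k * ((⨆ j, v.r k j) - v.r k (ihat k))

end Inst

/-- `Y` has the binomial law with `m` trials and success probability `p` under `P`. -/
def HasBinomialLaw {Ω : Type*} [MeasurableSpace Ω] (P : Measure Ω)
    (Y : Ω → ℕ) (m : ℕ) (p : ℝ) : Prop :=
  ∀ t : ℕ, P {ω | Y ω = t} =
    ENNReal.ofReal ((m.choose t : ℝ) * p ^ t * (1 - p) ^ (m - t))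

/-- The data model of offline RLHF with pairwise comparisons: for each triple `(k,i,j)`
with `N_{k,i,j} > 0`, the count `Y k i j` is binomial with `n·N_{k,i,j}` trials and
success probability `σ(r_{k,i} − r_{k,j})`, and these counts are independent. -/
def IsBTLSample {S A d : ℕ} (v : Inst S A d) (n : ℕ) {Ω : Type*} [MeasurableSpace Ω]
    (P : Measure Ω) (Y : Fin S → Fin A → Fin A → Ω → ℕ) : Prop :=
  (∀ k i j, Measurable (Y k i j)) ∧
  (∀ k i j, 0 < v.N k i j →
    HasBinomialLaw P (Y k i j) ⌈(n : ℝ) * v.N k i j⌉₊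
      (sigmoid (v.r k i - v.r k j))) ∧
  iIndepFun
    (fun (t : {t : Fin S × Fin A × Fin A // 0 < v.N t.1 t.2.1 t.2.2}) =>
      fun ω => (Y t.1.1 t.1.2.1 t.1.2.2 ω : ℝ)) P

/-- The data model of DP-RL-LOW: on top of the BTL counts, for each triple with
`N_{k,i,j} > 0` there is Gaussian noise `ξ k i j` of mean `0` and variance
`2·log(1.25/δ)/(ε·n·N_{k,i,j})²`, and all counts and noises are jointly independent. -/
def IsDPSample {S A d : ℕ} (v : Inst S A d) (n : ℕ) (ε δ : ℝ) {Ω : Type*}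
    [MeasurableSpace Ω] (P : Measure Ω)
    (Y : Fin S → Fin A → Fin A → Ω → ℕ) (ξ : Fin S → Fin A → Fin A → Ω → ℝ) : Prop :=
  (∀ k i j, Measurable (Y k i j)) ∧
  (∀ k i j, Measurable (ξ k i j)) ∧
  (∀ k i j, 0 < v.N k i j →
    HasBinomialLaw P (Y k i j) ⌈(n : ℝ) * v.N k i j⌉₊
      (sigmoid (v.r k i - v.r k j))) ∧
  (∀ k i j, 0 < v.N k i j →
    P.map (ξ k i j) =
      gaussianReal 0
        (Real.toNNReal (2 * Real.log (1.25 / δ) / (ε * n * v.N k i j) ^ 2))) ∧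
  iIndepFun
    (fun (t : {t : Fin S × Fin A × Fin A // 0 < v.N t.1 t.2.1 t.2.2} ⊕
              {t : Fin S × Fin A × Fin A // 0 < v.N t.1 t.2.1 t.2.2}) =>
      Sum.elim
        (fun t => fun ω => (Y t.1.1 t.1.2.1 t.1.2.2 ω : ℝ))
        (fun t => ξ t.1.1 t.1.2.1 t.1.2.2) t) P

end RLHF

open RLHF

/-!
Each summand of `r̂` is a weight times `logit (clip L (Y / m))` with `Y ∼ Bin(m, σ Δ)`,
`Δ = r_{k',i'} - r_{k',j'}` and `m = n N_{k',i',j'}`. Clipping projects onto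
`[σ (-2L), σ (2L)]`, an interval containing `σ Δ` on which `logit` is
`2 (1 + e^{2L})`-Lipschitz, and `logit (σ Δ) = Δ`; so the bias of the summand is at most
`2 (1 + e^{2L}) E|Y/m - σ Δ| ≤ (1 + e^{2L}) / √m`, by Jensen and the binomial variance
`σ Δ (1 - σ Δ) / m ≤ 1 / (4m)`. Summing against the weights gives
`(1 + e^{2L}) γ̃ / √n`, where `γ̃` may be computed with the weights of `(i, i*)` instead of
`(i*, i)` because the minimum-cost feasible weights are unique (the cost is strictly convex)
and negating a feasible vector swaps the pair. Finally `1 + e^{2L} = (1 - β)⁻¹ ≤ 3 (1 - β)⁻⁴`.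
-/

open Set unitInterval

namespace RLHF

lemma sigmoid_eq_real_sigmoid (x : ℝ) : sigmoid x = Real.sigmoid x := by
  rw [sigmoid, Real.sigmoid_def, exp_neg]
  field_simp
  ring

lemma logit_sigmoid (x : ℝ) : logit (Real.sigmoid x) = x := by
  rw [logit, ← Real.sigmoid_neg, ← Real.sigmoid_mul_rexp_neg,
    div_mul_cancel_left₀ (Real.sigmoid_pos x).ne', exp_neg, inv_inv, log_exp]

lemma abs_log_sub_log_le {a u v : ℝ} (ha : 0 < a) (hu : a ≤ u) (hv : a ≤ v) :
    |log u - log v| ≤ |u - v| / a := by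
  have key : ∀ {x y : ℝ}, a ≤ x → a ≤ y → log x - log y ≤ |x - y| / a := fun {x y} hx hy => by
    have hx0 : 0 < x := ha.trans_le hx
    have hy0 : 0 < y := ha.trans_le hy
    calc log x - log y = log (x / y) := (log_div hx0.ne' hy0.ne').symm
      _ ≤ x / y - 1 := log_le_sub_one_of_pos (div_pos hx0 hy0)
      _ = (x - y) / y := by field_simp
      _ ≤ |x - y| / y := by gcongr; exact le_abs_self _
      _ ≤ |x - y| / a := by gcongr
  rw [abs_sub_le_iff]
  exact ⟨key hu hv, abs_sub_comm u v ▸ key hv hu⟩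

lemma abs_logit_sub_logit_le {a u v : ℝ} (ha : 0 < a) (hu : u ∈ Icc a (1 - a))
    (hv : v ∈ Icc a (1 - a)) : |logit u - logit v| ≤ 2 / a * |u - v| := by
  have hlogit : ∀ {x}, x ∈ Icc a (1 - a) → logit x = log x - log (1 - x) := fun hx => by
    rw [logit, log_div (by linarith [hx.1]) (by linarith [hx.2])]
  rw [hlogit hu, hlogit hv]
  calc |log u - log (1 - u) - (log v - log (1 - v))|
      ≤ |log u - log v| + |log (1 - u) - log (1 - v)| := by
        rw [sub_sub_sub_comm]; exact abs_sub _ _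
    _ ≤ |u - v| / a + |(1 - u) - (1 - v)| / a :=
        add_le_add (abs_log_sub_log_le ha hu.1 hv.1)
          (abs_log_sub_log_le ha (by linarith [hu.2]) (by linarith [hv.2]))
    _ = 2 / a * |u - v| := by rw [sub_sub_sub_cancel_left, abs_sub_comm]; ring

lemma clip_eq_projIcc {L : ℝ} (hL : 0 ≤ L) (x : ℝ) :
    clip L x = projIcc (Real.sigmoid (-(2 * L))) (Real.sigmoid (2 * L))
      (Real.sigmoid_le (by linarith)) x := by
  rw [coe_projIcc, clip, ← sigmoid, sigmoid_eq_real_sigmoid, Real.sigmoid_def (-(2 * L)), neg_neg,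
    one_div]

lemma abs_logit_clip_sub_le {L Δ : ℝ} (hΔ : |Δ| ≤ 2 * L) (x : ℝ) :
    |logit (clip L x) - Δ| ≤ 2 * (1 + exp (2 * L)) * |x - Real.sigmoid Δ| := by
  have hL : 0 ≤ L := by linarith [abs_nonneg Δ]
  set a := Real.sigmoid (-(2 * L)) with ha_def
  have ha : 0 < a := Real.sigmoid_pos _
  have h1a : 1 - a = Real.sigmoid (2 * L) := by rw [ha_def, ← Real.sigmoid_neg, neg_neg]
  have hclip_mem : ∀ y, clip L y ∈ Icc a (1 - a) := fun y => by
    rw [h1a, clip_eq_projIcc hL]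
    exact Subtype.prop _
  have hp : Real.sigmoid Δ ∈ Icc a (1 - a) := by
    rw [h1a]
    exact ⟨Real.sigmoid_le (abs_le.1 hΔ).1, Real.sigmoid_le (abs_le.1 hΔ).2⟩
  have hclip_p : clip L (Real.sigmoid Δ) = Real.sigmoid Δ := by
    rw [clip_eq_projIcc hL, projIcc_of_mem _ (h1a ▸ hp)]
  calc |logit (clip L x) - Δ| = |logit (clip L x) - logit (clip L (Real.sigmoid Δ))| := by
        rw [hclip_p, logit_sigmoid]
    _ ≤ 2 / a * |clip L x - clip L (Real.sigmoid Δ)| :=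
        abs_logit_sub_logit_le ha (hclip_mem x) (hclip_mem _)
    _ ≤ 2 / a * |x - Real.sigmoid Δ| := by
        refine mul_le_mul_of_nonneg_left ?_ (by positivity)
        simp only [clip_eq_projIcc hL]
        exact abs_projIcc_sub_projIcc _
    _ = 2 * (1 + exp (2 * L)) * |x - Real.sigmoid Δ| := by
        rw [ha_def, Real.sigmoid_def, neg_neg, div_inv_eq_mul]

lemma HasBinomialLaw.map_eq {Ω : Type*} [MeasurableSpace Ω] {P : Measure Ω} {Y : Ω → ℕ}
    {m : ℕ} {p : I} (hY : Measurable Y) (h : HasBinomialLaw P Y m p) :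
    P.map Y = Bin(m, p) :=
  Measure.ext_of_singleton fun t => by
    rw [Measure.map_apply hY (measurableSet_singleton t), binomial_singleton]
    exact h t

lemma integral_binomial_abs_div_sub_le {m : ℕ} (hm : m ≠ 0) (p : I) :
    ∫ k, |(k : ℝ) / m - p| ∂Bin(m, p) ≤ 1 / (2 * √m) := by
  have hm0 : (0 : ℝ) < m := by positivity
  have hsum : ∫ k, |(k : ℝ) / m - p| ∂Bin(m, p) =
      ∑ k : Fin (m + 1), bernstein m k p * |(p : ℝ) - bernstein.z k| := by
    rw [integral_binomial, ← Nat.range_succ_eq_Iic, ← Fin.sum_univ_eq_sum_range]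
    refine Finset.sum_congr rfl fun k _ => ?_
    rw [bernstein_apply, smul_eq_mul, abs_sub_comm]
    rfl
  -- Jensen for `x ↦ x ²` against the Bernstein weights, then their variance `p (1 - p) / m`.
  have hsq : (∫ k, |(k : ℝ) / m - p| ∂Bin(m, p)) ^ 2 ≤ (p : ℝ) * (1 - p) / m := by
    have jensen := (convexOn_pow 2).map_sum_le (t := Finset.univ) (fun k _ => bernstein_nonneg)
      (bernstein.probability m p) (fun k _ => abs_nonneg ((p : ℝ) - bernstein.z k))
    simp only [smul_eq_mul, sq_abs] at jensen
    rw [hsum, ← bernstein.variance hm p]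
    simpa only [mul_comm] using jensen
  have hpq : (p : ℝ) * (1 - p) ≤ 1 / 4 := by nlinarith [sq_nonneg ((p : ℝ) - 1 / 2)]
  rw [← pow_le_pow_iff_left₀ (integral_nonneg fun _ => abs_nonneg _) (by positivity) two_ne_zero]
  calc _ ≤ (p : ℝ) * (1 - p) / m := hsq
    _ ≤ 1 / 4 / m := by gcongr
    _ = (1 / (2 * √m)) ^ 2 := by rw [div_pow, mul_pow, sq_sqrt hm0.le]; ring

lemma abs_integral_binomial_logit_clip_sub_le {L Δ : ℝ} (hΔ : |Δ| ≤ 2 * L) {m : ℕ}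
    (hm : m ≠ 0) :
    |∫ k, logit (clip L ((k : ℝ) / m)) ∂Bin(m, unitInterval.sigmoid Δ) - Δ| ≤
      (1 + exp (2 * L)) / √m := by
  calc _ = |∫ k, (logit (clip L ((k : ℝ) / m)) - Δ) ∂Bin(m, unitInterval.sigmoid Δ)| := by
        rw [integral_sub (integrable_binomial _) (integrable_const _), integral_const,
          probReal_univ, one_smul]
    _ ≤ ∫ k, |logit (clip L ((k : ℝ) / m)) - Δ| ∂Bin(m, unitInterval.sigmoid Δ) :=
        abs_integral_le_integral_abs
    _ ≤ ∫ k, 2 * (1 + exp (2 * L)) * |(k : ℝ) / m - unitInterval.sigmoid Δ|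
          ∂Bin(m, unitInterval.sigmoid Δ) :=
        integral_mono (integrable_binomial _) (integrable_binomial _)
          fun k => abs_logit_clip_sub_le hΔ _
    _ ≤ 2 * (1 + exp (2 * L)) * (1 / (2 * √m)) := by
        rw [integral_const_mul]
        gcongr
        exact integral_binomial_abs_div_sub_le hm _
    _ = (1 + exp (2 * L)) / √m := by field_simp

lemma HasBinomialLaw.abs_integral_logit_clip_sub_le {Ω : Type*} [MeasurableSpace Ω]
    {P : Measure Ω} {Y : Ω → ℕ} {m : ℕ} {L Δ : ℝ} (hY : Measurable Y)
    (h : HasBinomialLaw P Y m (sigmoid Δ)) (hm : m ≠ 0) (hΔ : |Δ| ≤ 2 * L) :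
    Integrable (fun ω => logit (clip L ((Y ω : ℝ) / m))) P ∧
      |∫ ω, logit (clip L ((Y ω : ℝ) / m)) ∂P - Δ| ≤ (1 + exp (2 * L)) / √m := by
  have hmap : P.map Y = Bin(m, unitInterval.sigmoid Δ) :=
    HasBinomialLaw.map_eq hY (by rwa [sigmoid_eq_real_sigmoid] at h)
  refine ⟨?_, ?_⟩
  · have := integrable_binomial (n := m) (p := unitInterval.sigmoid Δ)
      fun k => logit (clip L ((k : ℝ) / m))
    exact (hmap ▸ this).comp_measurable hY
  · rw [← integral_map (f := fun k : ℕ => logit (clip L ((k : ℝ) / m))) hY.aemeasurable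
      .of_discrete, hmap]
    exact abs_integral_binomial_logit_clip_sub_le hΔ hm

lemma sum_sum_sum_eq_sum_prod {α β γ M : Type*} [Fintype α] [Fintype β] [Fintype γ]
    [AddCommMonoid M] (f : α → β → γ → M) :
    ∑ a, ∑ b, ∑ c, f a b c = ∑ x : α × β × γ, f x.1 x.2.1 x.2.2 := by
  simp only [Fintype.sum_prod_type]

lemma abs_integral_sum_sub_sum_le {ι Ω : Type*} [Fintype ι] [MeasurableSpace Ω]
    {P : Measure Ω} {f : ι → Ω → ℝ} {c b : ι → ℝ} (hf : ∀ t, Integrable (f t) P)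
    (h : ∀ t, |∫ ω, f t ω ∂P - c t| ≤ b t) :
    |∫ ω, ∑ t, f t ω ∂P - ∑ t, c t| ≤ ∑ t, b t := by
  rw [integral_finsetSum _ fun t _ => hf t, ← Finset.sum_sub_distrib]
  exact (Finset.abs_sum_le_sum_abs _ _).trans (Finset.sum_le_sum fun t _ => h t)

lemma one_add_exp_le (x : ℝ) : 1 + exp x ≤ 3 / (1 - exp x / (1 + exp x)) ^ 4 := by
  have hpos : 0 < 1 + exp x := by positivity
  have h : 1 - exp x / (1 + exp x) = (1 + exp x)⁻¹ := by field_simp; ring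
  rw [h, inv_pow, div_inv_eq_mul]
  calc 1 + exp x ≤ (1 + exp x) ^ 4 := le_self_pow₀ (by linarith [exp_pos x]) (by norm_num)
    _ ≤ 3 * (1 + exp x) ^ 4 := by linarith [pow_pos hpos 4]

namespace Inst

section Weights

variable {S A d : ℕ} (v : Inst S A d)

lemma cost_neg (u : Fin S → Fin A → Fin A → ℝ) : v.cost (-u) = v.cost u := by
  simp only [cost, Pi.neg_apply, neg_sq]

lemma cost_half_add_add_cost_half_sub (u w : Fin S → Fin A → Fin A → ℝ) :
    v.cost ((2⁻¹ : ℝ) • (u + w)) + v.cost ((2⁻¹ : ℝ) • (u - w)) =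
      (v.cost u + v.cost w) / 2 := by
  simp only [cost, ← Finset.sum_add_distrib, Finset.sum_div]
  refine Finset.sum_congr rfl fun _ _ => Finset.sum_congr rfl fun _ _ =>
    Finset.sum_congr rfl fun _ _ => ?_
  split_ifs
  · simp only [Pi.smul_apply, Pi.add_apply, Pi.sub_apply, smul_eq_mul]
    ring
  · simp

lemma eq_zero_of_cost_nonpos {u : Fin S → Fin A → Fin A → ℝ}
    (hu : ∀ k i j, v.N k i j = 0 → u k i j = 0) (h : v.cost u ≤ 0) : u = 0 := by
  have hnn : ∀ k i j, 0 ≤ if 0 < v.N k i j then u k i j ^ 2 / v.N k i j else 0 :=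
    fun _ _ _ => by split_ifs <;> positivity
  funext k i j
  obtain hN | hN := (v.N_nonneg k i j).lt_or_eq
  · have hterm : u k i j ^ 2 / v.N k i j ≤ v.cost u :=
      calc u k i j ^ 2 / v.N k i j
          = if 0 < v.N k i j then u k i j ^ 2 / v.N k i j else 0 := (if_pos hN).symm
        _ ≤ _ := Finset.single_le_sum (fun j' _ => hnn k i j') (Finset.mem_univ j)
        _ ≤ _ := Finset.single_le_sum (fun i' _ => Finset.sum_nonneg fun j' _ => hnn k i' j')
            (Finset.mem_univ i)
        _ ≤ v.cost u := Finset.single_le_sum (fun k' _ => Finset.sum_nonneg fun i' _ =>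
            Finset.sum_nonneg fun j' _ => hnn k' i' j') (Finset.mem_univ k)
    have hsq : u k i j ^ 2 ≤ 0 := by
      have := hterm.trans h
      rwa [div_le_iff₀ hN, zero_mul] at this
    exact pow_eq_zero_iff two_ne_zero |>.1 (le_antisymm hsq (sq_nonneg _))
  · exact hu k i j hN.symm

lemma gammaTilde_neg (u : Fin S → Fin A → Fin A → ℝ) : v.gammaTilde (-u) = v.gammaTilde u := by
  simp only [gammaTilde, Pi.neg_apply, abs_neg]

lemma gammaTilde_nonneg (u : Fin S → Fin A → Fin A → ℝ) : 0 ≤ v.gammaTilde u :=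
  Finset.sum_nonneg fun _ _ => Finset.sum_nonneg fun _ _ => Finset.sum_nonneg fun _ _ => by
    split_ifs <;> positivity

variable {v} {k : Fin S} {i j : Fin A}

lemma Feasible.neg {u : Fin S → Fin A → Fin A → ℝ} (h : v.Feasible k i j u) :
    v.Feasible k j i (-u) := by
  refine ⟨fun k' i' j' hN => by simp [h.1 k' i' j' hN], ?_⟩
  simp only [Pi.neg_apply, neg_smul, Finset.sum_neg_distrib, ← h.2, neg_sub]

lemma Feasible.midpoint {u w : Fin S → Fin A → Fin A → ℝ} (hu : v.Feasible k i j u)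
    (hw : v.Feasible k i j w) : v.Feasible k i j ((2⁻¹ : ℝ) • (u + w)) := by
  refine ⟨fun k' i' j' hN => by simp [hu.1 k' i' j' hN, hw.1 k' i' j' hN], ?_⟩
  simp only [Pi.smul_apply, Pi.add_apply, smul_eq_mul, mul_add, add_smul, mul_smul,
    Finset.sum_add_distrib, ← Finset.smul_sum, ← hu.2, ← hw.2, ← smul_add, ← two_smul ℝ]
  rw [smul_smul, inv_mul_cancel₀ two_ne_zero, one_smul]

lemma Feasible.sub_r_eq {u : Fin S → Fin A → Fin A → ℝ} (h : v.Feasible k i j u) :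
    v.r k i - v.r k j = ∑ k', ∑ i', ∑ j', u k' i' j' * (v.r k' i' - v.r k' j') := by
  simp only [Inst.r, ← inner_sub_left, h.2, sum_inner, real_inner_smul_left]

lemma IsLOW.neg {w : Fin S → Fin A → Fin A → ℝ} (h : v.IsLOW k i j w) : v.IsLOW k j i (-w) :=
  ⟨h.1.neg, fun u hu => by simpa only [v.cost_neg, neg_neg] using h.2 (-u) hu.neg⟩

-- If `w₁ ≠ w₂`, their midpoint is feasible and, by the parallelogram identity, strictly cheaper.
lemma IsLOW.unique {w₁ w₂ : Fin S → Fin A → Fin A → ℝ} (h₁ : v.IsLOW k i j w₁)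
    (h₂ : v.IsLOW k i j w₂) : w₁ = w₂ := by
  have hcost : v.cost w₁ = v.cost w₂ := le_antisymm (h₁.2 _ h₂.1) (h₂.2 _ h₁.1)
  have hmid := h₁.2 _ (h₁.1.midpoint h₂.1)
  have hdiff : v.cost ((2⁻¹ : ℝ) • (w₁ - w₂)) ≤ 0 := by
    linarith [v.cost_half_add_add_cost_half_sub w₁ w₂]
  have := v.eq_zero_of_cost_nonpos
    (fun k' i' j' hN => by simp [h₁.1.1 k' i' j' hN, h₂.1.1 k' i' j' hN]) hdiff
  simpa [sub_eq_zero] using this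

end Weights

section Estimator

variable {S A d : ℕ} (v : Inst S A d) {Ω : Type*} [MeasurableSpace Ω] {P : Measure Ω}
  {Y : Fin S → Fin A → Fin A → Ω → ℕ} {n : ℕ} {L : ℝ}

lemma abs_integral_logit_clip_B_sub_le (hY : IsBTLSample v n P Y)
    (hr : ∀ k i, |v.r k i| ≤ L) (hn : n ≠ 0) {k : Fin S} {i j : Fin A} {m : ℕ}
    (hm : (m : ℝ) = n * v.N k i j) (hN : 0 < v.N k i j) :
    Integrable (fun ω => logit (clip L (v.B n (fun k' i' j' => Y k' i' j' ω) k i j))) P ∧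
      |∫ ω, logit (clip L (v.B n (fun k' i' j' => Y k' i' j' ω) k i j)) ∂P -
          (v.r k i - v.r k j)| ≤ (1 + exp (2 * L)) / (√n * √(v.N k i j)) := by
  have hm0 : m ≠ 0 := by
    have : (0 : ℝ) < m := by rw [hm]; positivity
    exact_mod_cast this.ne'
  have hlaw : HasBinomialLaw P (Y k i j) m (sigmoid (v.r k i - v.r k j)) := by
    simpa only [← hm, Nat.ceil_natCast] using hY.2.1 k i j hN
  have hΔ : |v.r k i - v.r k j| ≤ 2 * L := by
    linarith [abs_sub (v.r k i) (v.r k j), hr k i, hr k j]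
  simp only [B, if_pos hN, ← hm, ← sqrt_mul (Nat.cast_nonneg n)]
  exact hlaw.abs_integral_logit_clip_sub_le (hY.1 k i j) hm0 hΔ

lemma abs_integral_sum_logit_clip_B_sub_le (hY : IsBTLSample v n P Y)
    (hr : ∀ k i, |v.r k i| ≤ L) (hn : n ≠ 0)
    (hdiv : ∀ k i j, ∃ m : ℕ, (m : ℝ) = n * v.N k i j) {u : Fin S → Fin A → Fin A → ℝ}
    (hu : ∀ k i j, v.N k i j = 0 → u k i j = 0) :
    |∫ ω, ∑ k, ∑ i, ∑ j,
          u k i j * logit (clip L (v.B n (fun k' i' j' => Y k' i' j' ω) k i j)) ∂P -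
        ∑ k, ∑ i, ∑ j, u k i j * (v.r k i - v.r k j)| ≤
      (1 + exp (2 * L)) / √n * v.gammaTilde u := by
  have hterm : ∀ k i j,
      Integrable
        (fun ω => u k i j * logit (clip L (v.B n (fun k' i' j' => Y k' i' j' ω) k i j))) P ∧
      |∫ ω, u k i j * logit (clip L (v.B n (fun k' i' j' => Y k' i' j' ω) k i j)) ∂P -
          u k i j * (v.r k i - v.r k j)| ≤
        (1 + exp (2 * L)) / √n * if 0 < v.N k i j then |u k i j| / √(v.N k i j) else 0 := by
    intro k i j
    by_cases hN : 0 < v.N k i j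
    · obtain ⟨m, hm⟩ := hdiv k i j
      obtain ⟨hint, hbias⟩ := v.abs_integral_logit_clip_B_sub_le hY hr hn hm hN
      refine ⟨hint.const_mul _, ?_⟩
      rw [integral_const_mul, ← mul_sub, abs_mul, if_pos hN]
      calc _ ≤ |u k i j| * ((1 + exp (2 * L)) / (√n * √(v.N k i j))) := by gcongr
        _ = _ := by ring
    · simp [hu k i j (not_lt.1 hN |>.antisymm (v.N_nonneg k i j)), hN]
  simp only [gammaTilde, Finset.mul_sum, sum_sum_sum_eq_sum_prod]
  exact abs_integral_sum_sub_sum_le (fun _ => (hterm _ _ _).1) (fun _ => (hterm _ _ _).2)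

end Estimator

end Inst

end RLHF

theorem rl_low_estimate_bias_bound_general (L : ℝ)
    (S A d : ℕ)
    (v : Inst S A d) (hr : ∀ k i, |v.r k i| ≤ L)
    (istar : Fin S → Fin A)
    (w : Fin S → Fin A → Fin A → Fin S → Fin A → Fin A → ℝ)
    (hw : ∀ k i j, i ≠ j → v.IsLOW k i j (w k i j))
    (n : ℕ) (hn : 1 ≤ n)
    (hdiv : ∀ k i j, ∃ m : ℕ, (m : ℝ) = n * v.N k i j)
    (Ω : Type) [MeasurableSpace Ω] (P : MeasureTheory.Measure Ω)
    (Y : Fin S → Fin A → Fin A → Ω → ℕ) (hY : IsBTLSample v n P Y)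
    (k : Fin S) (i : Fin A) (hi : i ≠ istar k) :
    |(∫ ω, v.rhat L n w (fun k' i' j' => Y k' i' j' ω) k (istar k) i ∂P) -
        (v.r k (istar k) - v.r k i)| ≤
      3 * v.gammaTilde (w k i (istar k)) /
        ((1 - Real.exp (2 * L) / (1 + Real.exp (2 * L))) ^ 4 * Real.sqrt n) := by
  have hlow := hw k (istar k) i hi.symm
  have hanti : w k (istar k) i = -w k i (istar k) := hlow.unique (hw k i (istar k) hi).neg
  simp only [Inst.rhat, if_neg hi.symm]
  rw [hlow.1.sub_r_eq]
  calc _ ≤ (1 + exp (2 * L)) / √n * v.gammaTilde (w k (istar k) i) :=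
        v.abs_integral_sum_logit_clip_B_sub_le hY hr (by omega) hdiv hlow.1.1
    _ = (1 + exp (2 * L)) / √n * v.gammaTilde (w k i (istar k)) := by
        rw [hanti, Inst.gammaTilde_neg]
    _ ≤ 3 / (1 - exp (2 * L) / (1 + exp (2 * L))) ^ 4 / √n * v.gammaTilde (w k i (istar k)) := by
        gcongr
        · exact v.gammaTilde_nonneg _
        · exact one_add_exp_le _
    _ = _ := by rw [div_div, div_mul_eq_mul_div]

/-- **Bias bound for the RL-LOW relative-reward estimate.**
For every consistent instance `v`, every `n ≥ 1` with `n·N_{k,i,j} ∈ ℕ`, and every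
`(k,i)` with `i ≠ i*_k`,
`|E[r̂_{k,i*_k,i}] − (r_{k,i*_k} − r_{k,i})| ≤ 3·γ̃_{k,i}/((1−β)⁴·√n)` with
`β = e^{2L}/(1+e^{2L})`. -/
theorem rl_low_estimate_bias_bound (L : ℝ) (hL : 0 < L)
    (S A d : ℕ) (hA : 2 ≤ A)
    (v : Inst S A d) (hr : ∀ k i, |v.r k i| ≤ L) (hcons : v.Consistent)
    (istar : Fin S → Fin A) (histar : v.BestAction istar)
    (w : Fin S → Fin A → Fin A → Fin S → Fin A → Fin A → ℝ)
    (hw : ∀ k i j, i ≠ j → v.IsLOW k i j (w k i j))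
    (n : ℕ) (hn : 1 ≤ n)
    (hdiv : ∀ k i j, ∃ m : ℕ, (m : ℝ) = n * v.N k i j)
    (Ω : Type) [MeasurableSpace Ω] (P : MeasureTheory.Measure Ω)
    [MeasureTheory.IsProbabilityMeasure P]
    (Y : Fin S → Fin A → Fin A → Ω → ℕ) (hY : IsBTLSample v n P Y)
    (k : Fin S) (i : Fin A) (hi : i ≠ istar k) :
    |(∫ ω, v.rhat L n w (fun k' i' j' => Y k' i' j' ω) k (istar k) i ∂P) -
        (v.r k (istar k) - v.r k i)| ≤
      3 * v.gammaTilde (w k i (istar k)) /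
        ((1 - Real.exp (2 * L) / (1 + Real.exp (2 * L))) ^ 4 * Real.sqrt n) :=
  rl_low_estimate_bias_bound_general L S A d v hr istar w hw n hn hdiv Ω P Y hY k i hi
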